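/- arXiv:1407.4827 — 2 statements merged into one kernel-verified Lean document; each statement's English description precedes it below -/
import Mathlib

section
/- Let C be a self-dual code of length n over Z_{2^m} and let C_0 = {c ∈ C : wt_E(c) ≡ 0 (mod 2^{m+1})}, where wt_E is the Euclidean weight. Then C_0 is an additive subgroup of C, and if C contains a codeword of Euclidean weight not divisible by 2^{m+1} (i.e. C is Type I), then C_0 has index 2 in C. -/
open Finset

/-- Standard bilinear (dot) product on `Fin n → R`. -/
def dotp {R : Type*} [CommRing R] {n : ℕ} (u v : Fin n → R) : R := ∑ i, u i * v i

/-- Dual of a set of vectors with respect to the standard bilinear form. -/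
def dualCode {R : Type*} [CommRing R] {n : ℕ} (S : Set (Fin n → R)) : Set (Fin n → R) :=
  {v | ∀ u ∈ S, dotp u v = 0}

/-- Euclidean weight of an element of `ZMod N`. -/
def wtE {N : ℕ} (a : ZMod N) : ℕ := min (a.val ^ 2) ((N - a.val) ^ 2)

/-- Euclidean weight of a vector. -/
def wtEv {N n : ℕ} (v : Fin n → ZMod N) : ℕ := ∑ i, wtE (v i)

/-- Doubly-even subcode (as a set): codewords of Euclidean weight divisible by 2^(m+1). -/
def deSub (m n : ℕ) (C : AddSubgroup (Fin n → ZMod (2 ^ m))) : Set (Fin n → ZMod (2 ^ m)) :=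
  {c | c ∈ C ∧ 2 ^ (m + 1) ∣ wtEv c}

/-! For even `N` one has `wtE a ≡ a.val ^ 2 [MOD 2 * N]`, because `(N - a) ^ 2 - a ^ 2 = N (N - 2a)`.
So on a self-orthogonal code over `ZMod N`, where all dot products vanish mod `N`,
`wtE (x + y) ≡ wtE x + wtE y + 2 ⟨x, y⟩ ≡ wtE x + wtE y [MOD 2N]` and `wtE x ≡ ⟨x, x⟩ ≡ 0 [MOD N]`.
Hence `x ↦ wtE x / N mod 2` is a homomorphism `C → ZMod 2` whose kernel is the doubly-even
subcode; for a Type I code it is onto, so the kernel has index 2. -/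
section EvenModulus

variable {N : ℕ}

lemma sq_modEq_sq_of_modEq (hN : Even N) {a b : ℕ} (h : a ≡ b [MOD N]) :
    a ^ 2 ≡ b ^ 2 [MOD 2 * N] := by
  obtain ⟨k, rfl⟩ := hN
  rw [Nat.modEq_iff_dvd] at h ⊢
  obtain ⟨t, ht⟩ := h
  refine ⟨t * (a + k * t), ?_⟩
  push_cast at ht ⊢
  rw [show (b : ℤ) = a + (k + k) * t by linarith]
  ring

lemma wtE_modEq_val_sq [NeZero N] (hN : Even N) (a : ZMod N) :
    wtE a ≡ a.val ^ 2 [MOD 2 * N] := by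
  obtain ⟨k, rfl⟩ := hN
  rcases min_choice (a.val ^ 2) ((k + k - a.val) ^ 2) with h | h <;> rw [wtE, h]
  rw [Nat.modEq_iff_dvd]
  exact ⟨a.val - k, by push_cast [Nat.cast_sub a.val_lt.le]; ring⟩

variable {n : ℕ}

lemma dotp_eq_zero_iff_dvd [NeZero N] (x y : Fin n → ZMod N) :
    dotp x y = 0 ↔ N ∣ ∑ i, (x i).val * (y i).val := by
  rw [← ZMod.natCast_eq_zero_iff]
  push_cast [ZMod.natCast_zmod_val]
  rfl

lemma wtEv_modEq_sum_val_sq [NeZero N] (hN : Even N) (v : Fin n → ZMod N) :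
    wtEv v ≡ ∑ i, (v i).val ^ 2 [MOD 2 * N] :=
  Nat.ModEq.sum fun i _ => wtE_modEq_val_sq hN (v i)

lemma sum_val_sq_add_modEq [NeZero N] (hN : Even N) (x y : Fin n → ZMod N) :
    ∑ i, ((x + y) i).val ^ 2 ≡
      ∑ i, (x i).val ^ 2 + ∑ i, (y i).val ^ 2 + 2 * ∑ i, (x i).val * (y i).val [MOD 2 * N] := by
  have hexpand : ∑ i, ((x i).val + (y i).val) ^ 2 =
      ∑ i, (x i).val ^ 2 + ∑ i, (y i).val ^ 2 + 2 * ∑ i, (x i).val * (y i).val := by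
    rw [mul_sum, ← sum_add_distrib, ← sum_add_distrib]
    exact sum_congr rfl fun i _ => by ring
  rw [← hexpand]
  refine Nat.ModEq.sum fun i _ => sq_modEq_sq_of_modEq hN ?_
  rw [Pi.add_apply, ZMod.val_add]
  exact Nat.mod_modEq _ _

lemma wtEv_add_modEq [NeZero N] (hN : Even N) {x y : Fin n → ZMod N} (hxy : dotp x y = 0) :
    wtEv (x + y) ≡ wtEv x + wtEv y [MOD 2 * N] := by
  obtain ⟨t, ht⟩ := (dotp_eq_zero_iff_dvd x y).1 hxy
  have hcross : 2 * ∑ i, (x i).val * (y i).val ≡ 0 [MOD 2 * N] :=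
    Nat.modEq_zero_iff_dvd.2 ⟨t, by rw [ht, mul_assoc]⟩
  calc wtEv (x + y) ≡ ∑ i, ((x + y) i).val ^ 2 [MOD 2 * N] := wtEv_modEq_sum_val_sq hN _
    _ ≡ ∑ i, (x i).val ^ 2 + ∑ i, (y i).val ^ 2 + 2 * ∑ i, (x i).val * (y i).val [MOD 2 * N] :=
      sum_val_sq_add_modEq hN x y
    _ ≡ ∑ i, (x i).val ^ 2 + ∑ i, (y i).val ^ 2 + 0 [MOD 2 * N] := hcross.add_left _
    _ ≡ wtEv x + wtEv y [MOD 2 * N] :=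
      ((wtEv_modEq_sum_val_sq hN x).add (wtEv_modEq_sum_val_sq hN y)).symm

lemma dvd_wtEv_of_dotp_self [NeZero N] (hN : Even N) {x : Fin n → ZMod N} (hx : dotp x x = 0) :
    N ∣ wtEv x := by
  have hsq : N ∣ ∑ i, (x i).val ^ 2 := by
    simpa only [sq] using (dotp_eq_zero_iff_dvd x x).1 hx
  exact ((wtEv_modEq_sum_val_sq hN x).dvd_iff (dvd_mul_left N 2)).2 hsq

end EvenModulus

lemma natCast_div_add_of_modEq {N a b c : ℕ} (hN : 0 < N) (ha : N ∣ a) (hb : N ∣ b)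
    (h : c ≡ a + b [MOD 2 * N]) : ((c / N : ℕ) : ZMod 2) = (a / N : ℕ) + (b / N : ℕ) := by
  obtain ⟨c, rfl⟩ : N ∣ c := (h.dvd_iff (dvd_mul_left N 2)).2 (dvd_add ha hb)
  obtain ⟨a, rfl⟩ := ha
  obtain ⟨b, rfl⟩ := hb
  rw [← mul_add, mul_comm 2 N] at h
  simp only [Nat.mul_div_cancel_left _ hN]
  rw [← Nat.cast_add, ZMod.natCast_eq_natCast_iff]
  exact Nat.ModEq.mul_left_cancel' hN.ne' h

lemma natCast_div_eq_zero_iff {N a : ℕ} (hN : 0 < N) (ha : N ∣ a) :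
    ((a / N : ℕ) : ZMod 2) = 0 ↔ 2 * N ∣ a := by
  obtain ⟨a, rfl⟩ := ha
  rw [Nat.mul_div_cancel_left _ hN, ZMod.natCast_eq_zero_iff, mul_comm 2 N]
  exact (Nat.mul_dvd_mul_iff_left hN).symm

lemma card_eq_two_mul_card_ker_of_apply_ne_zero {G : Type*} [AddGroup G] (f : G →+ ZMod 2) {g : G} (hg : f g ≠ 0) :
    Nat.card G = 2 * Nat.card f.ker := by
  have hf : Function.Surjective f := by
    intro a
    fin_cases a
    · exact ⟨0, map_zero f⟩
    · exact ⟨g, (by decide : ∀ a : ZMod 2, a ≠ 0 → a = 1) _ hg⟩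
  rw [← f.ker.card_mul_index, AddSubgroup.index_ker f, f.range_eq_top.2 hf, AddSubgroup.card_top,
    Nat.card_zmod, mul_comm]

section SelfOrthogonal

variable {N n : ℕ} [NeZero N] (hN : Even N) (C : AddSubgroup (Fin n → ZMod N))
  (hC : (C : Set (Fin n → ZMod N)) ⊆ dualCode C)

def weightParity : C →+ ZMod 2 where
  toFun x := ((wtEv (x : Fin n → ZMod N) / N : ℕ) : ZMod 2)
  map_zero' := by simp [wtEv, wtE]
  map_add' x y :=
    natCast_div_add_of_modEq (Nat.pos_of_neZero N) (dvd_wtEv_of_dotp_self hN (hC x.2 x x.2))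
      (dvd_wtEv_of_dotp_self hN (hC y.2 y y.2)) (wtEv_add_modEq hN (hC y.2 x x.2))

lemma weightParity_eq_zero_iff (x : C) :
    weightParity hN C hC x = 0 ↔ 2 * N ∣ wtEv (x : Fin n → ZMod N) :=
  natCast_div_eq_zero_iff (Nat.pos_of_neZero N) (dvd_wtEv_of_dotp_self hN (hC x.2 x x.2))

lemma coe_map_ker_weightParity :
    ((weightParity hN C hC).ker.map C.subtype : Set (Fin n → ZMod N)) =
      {c | c ∈ C ∧ 2 * N ∣ wtEv c} := by
  ext c
  simp [AddMonoidHom.mem_ker, weightParity_eq_zero_iff, and_comm]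

end SelfOrthogonal

theorem doubly_even_subcode_general (m n : ℕ) (hm : 0 < m)
    (C : AddSubgroup (Fin n → ZMod (2 ^ m)))
    (hC : (C : Set (Fin n → ZMod (2 ^ m))) = dualCode (C : Set (Fin n → ZMod (2 ^ m)))) :
    (0 ∈ deSub m n C) ∧
    (∀ x ∈ deSub m n C, ∀ y ∈ deSub m n C, x + y ∈ deSub m n C) ∧
    (∀ x ∈ deSub m n C, -x ∈ deSub m n C) ∧
    ((∃ c ∈ C, ¬ 2 ^ (m + 1) ∣ wtEv c) →
      Nat.card C = 2 * Nat.card ↥(deSub m n C)) := by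
  have hN : Even (2 ^ m) := (Nat.even_pow' hm.ne').2 even_two
  set f := weightParity hN C hC.le
  set D := f.ker.map C.subtype
  have hD : (D : Set _) = deSub m n C := by
    rw [coe_map_ker_weightParity, deSub, pow_succ']
  rw [← hD]
  refine ⟨D.zero_mem, fun x hx y hy => D.add_mem hx hy, fun x hx => D.neg_mem hx, ?_⟩
  rintro ⟨c, hc, hcw⟩
  have hfc : f ⟨c, hc⟩ ≠ 0 := by rwa [Ne, weightParity_eq_zero_iff, ← pow_succ']
  rw [SetLike.coe_sort_coe, AddSubgroup.card_map_of_injective C.subtype_injective]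
  exact card_eq_two_mul_card_ker_of_apply_ne_zero f hfc

theorem doubly_even_subcode (m n : ℕ) (hm : 0 < m) (hn : 0 < n)
    (C : AddSubgroup (Fin n → ZMod (2 ^ m)))
    (hC : (C : Set (Fin n → ZMod (2 ^ m))) = dualCode (C : Set (Fin n → ZMod (2 ^ m)))) :
    (0 ∈ deSub m n C) ∧
    (∀ x ∈ deSub m n C, ∀ y ∈ deSub m n C, x + y ∈ deSub m n C) ∧
    (∀ x ∈ deSub m n C, -x ∈ deSub m n C) ∧
    ((∃ c ∈ C, ¬ 2 ^ (m + 1) ∣ wtEv c) →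
      Nat.card C = 2 * Nat.card ↥(deSub m n C)) :=
  doubly_even_subcode_general m n hm C hC
end

section
/- Let C be a Type I code of length n over Z_{2^m} with shadow S = C_0^⊥ \ C, where C_0 is the doubly-even subcode of index 2 in C. Then for every s ∈ S, wt_E(s) ≡ 2^{m−2}·n (mod 2^{m+1}). -/
open Finset

/-!
Write `θ(v) = exp(π i ‖v‖² / 2ᵐ)` (`expNormSq`), where `‖v‖² = ∑ vᵢ²` is computed on
representatives and read modulo `2ᵐ⁺¹`, where it agrees with `wt_E(v)`. Then
`θ(u + v) = θ(u) θ(v) e(⟨u, v⟩)` with `e` the standard character of `ℤ/2ᵐ`. A shadow vector `s`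
is characteristic for `C`: `θ(c) e(⟨c, s⟩) = 1` for every `c ∈ C`, because both factors are `1` on
`C₀` and `-1` off it. Hence `θ` is constant on the coset `s + C`, and Poisson summation over the
self-dual code `C` evaluates `∑_{c ∈ C} θ(s + c)` as the `n`-th power of the quadratic Gauss sum
`∑_{a mod 2ᵐ} exp(π i a² / 2ᵐ) = 2^{m/2} exp(π i / 4)`. Comparing absolute values gives
`|C| = 2^{mn/2}`, and then `θ(s) = exp(π i n / 4)`, i.e. `wt_E(s) ≡ 2^{m-2} n (mod 2^{m+1})`.
-/

open ZMod

section Dotp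

variable {R : Type*} [CommRing R] {n : ℕ}

theorem dotp_eq_dotProduct (u v : Fin n → R) : dotp u v = u ⬝ᵥ v := rfl

theorem dotp_add_left (u v w : Fin n → R) :
    dotp (u + v) w = dotp u w + dotp v w := by
  simp only [dotp_eq_dotProduct, add_dotProduct]

theorem dotp_add_right (u v w : Fin n → R) :
    dotp u (v + w) = dotp u v + dotp u w := by
  simp only [dotp_eq_dotProduct, dotProduct_add]

def IsSelfDual (C : AddSubgroup (Fin n → R)) : Prop :=
  (C : Set (Fin n → R)) = dualCode (C : Set (Fin n → R))

theorem IsSelfDual.mem_dualCode_iff {C : AddSubgroup (Fin n → R)} (hC : IsSelfDual C)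
    {v : Fin n → R} : v ∈ dualCode (C : Set (Fin n → R)) ↔ v ∈ C := by
  rw [← hC, SetLike.mem_coe]

theorem IsSelfDual.dotp_eq_zero {C : AddSubgroup (Fin n → R)} (hC : IsSelfDual C)
    {u v : Fin n → R} (hu : u ∈ C) (hv : v ∈ C) : dotp u v = 0 :=
  hC.mem_dualCode_iff.2 hv u hu

end Dotp

theorem ZMod.stdAddChar_eq_one_iff {N : ℕ} [NeZero N] {x : ZMod N} :
    stdAddChar (N := N) x = 1 ↔ x = 0 := by
  rw [← AddChar.map_zero_eq_one (stdAddChar (N := N)), injective_stdAddChar.eq_iff]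

theorem ZMod.stdAddChar_natCast_eq_pow {N : ℕ} [NeZero N] (x : ℕ) :
    stdAddChar (N := N) (x : ZMod N) = stdAddChar (N := N) 1 ^ x := by
  rw [← AddChar.map_nsmul_eq_pow, nsmul_one]

theorem ZMod.stdAddChar_natCast_mul {N M : ℕ} [NeZero N] [NeZero M] (d x : ℕ) (h : N = d * M) :
    stdAddChar (N := N) ((d * x : ℕ) : ZMod N) = stdAddChar (N := M) (x : ZMod M) := by
  subst h
  have hd : (d : ℂ) ≠ 0 := by exact_mod_cast left_ne_zero_of_mul (NeZero.ne (d * M))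
  simp only [stdAddChar_apply, toCircle_natCast]
  congr 1
  push_cast
  field_simp

theorem ZMod.stdAddChar_two_one : stdAddChar (N := 2) 1 = -1 := by
  rw [stdAddChar_apply, toCircle_apply, ZMod.val_one]
  push_cast
  rw [show 2 * (Real.pi : ℂ) * Complex.I * 1 / 2 = Real.pi * Complex.I by ring,
    Complex.exp_pi_mul_I]

theorem ZMod.stdAddChar_eight_one :
    stdAddChar (N := 8) 1 = √2 / 2 * (1 + Complex.I) := by
  rw [stdAddChar_apply, toCircle_apply, show (1 : ZMod 8).val = 1 from rfl,
    show 2 * (Real.pi : ℂ) * Complex.I * ((1 : ℕ) : ℂ) / ((8 : ℕ) : ℂ) =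
      (Real.pi / 4 : ℝ) * Complex.I by push_cast; ring,
    Complex.exp_mul_I, ← Complex.ofReal_cos, ← Complex.ofReal_sin, Real.cos_pi_div_four,
    Real.sin_pi_div_four]
  push_cast
  ring

theorem ZMod.sum_comp_val {M : Type*} [AddCommMonoid M] (N : ℕ) [NeZero N] (g : ℕ → M) :
    ∑ a : ZMod N, g a.val = ∑ a ∈ range N, g a :=
  sum_nbij' (fun a => a.val) (fun b => (b : ZMod N)) (fun a _ => mem_range.2 a.val_lt)
    (fun _ _ => mem_univ _) (fun a _ => natCast_zmod_val a)
    (fun _ hb => val_cast_of_lt (mem_range.1 hb)) fun _ _ => rfl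

theorem AddChar.map_sum_eq_prod {ι A M : Type*} [AddCommMonoid A] [CommMonoid M]
    (ψ : AddChar A M) (s : Finset ι) (f : ι → A) : ψ (∑ i ∈ s, f i) = ∏ i ∈ s, ψ (f i) := by
  classical
  induction s using Finset.induction_on with
  | empty => simp
  | insert i s hi ih => rw [sum_insert hi, prod_insert hi, map_add_eq_mul, ih]

theorem Finset.sum_range_two_mul {M : Type*} [AddCommMonoid M] (n : ℕ) (f : ℕ → M) :
    ∑ a ∈ range (2 * n), f a = ∑ b ∈ range n, f (2 * b) + ∑ b ∈ range n, f (2 * b + 1) := by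
  induction n with
  | zero => simp
  | succ n ih =>
    rw [mul_add, mul_one, sum_range_succ, sum_range_succ, ih, sum_range_succ, sum_range_succ]
    abel

theorem Complex.eq_of_ofReal_mul_eq_ofReal_mul {a b : ℝ} {x y : ℂ} (ha : 0 < a) (hb : 0 ≤ b)
    (hx : ‖x‖ = 1) (hy : ‖y‖ = 1) (h : (a : ℂ) * x = b * y) : x = y := by
  have hab : a = b := by
    simpa [hx, hy, abs_of_pos ha, abs_of_nonneg hb] using congrArg norm h
  subst hab
  exact mul_left_cancel₀ (ofReal_ne_zero.2 ha.ne') h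

noncomputable def quadGaussSum (N : ℕ) [NeZero N] : ℂ :=
  ∑ a ∈ range N, stdAddChar (N := 2 * N) ((a ^ 2 : ℕ) : ZMod (2 * N))

/-- The even terms come from level `N` and repeat with period `N`; the odd terms cancel in pairs
`b`, `b + N`. -/
theorem quadGaussSum_of_eq_four_mul {M N : ℕ} [NeZero M] [NeZero N] (hM : M = 4 * N)
    (hN : Even N) : quadGaussSum M = 2 * quadGaussSum N := by
  subst hM
  obtain ⟨k, rfl⟩ := hN
  have h2 : ((2 * (k + k) : ℕ) : ZMod (2 * (k + k))) = 0 := ZMod.natCast_self _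
  have h8 : ((2 * (4 * (k + k)) : ℕ) : ZMod (2 * (4 * (k + k)))) = 0 := ZMod.natCast_self _
  have even_terms (b : ℕ) : stdAddChar (N := 2 * (4 * (k + k))) (((2 * b) ^ 2 : ℕ) : ZMod _) =
      stdAddChar (N := 2 * (k + k)) ((b ^ 2 : ℕ) : ZMod _) := by
    rw [show (2 * b) ^ 2 = 4 * b ^ 2 by ring,
      stdAddChar_natCast_mul (M := 2 * (k + k)) _ _ (by ring)]
  have even_period (b : ℕ) :
      (((k + k + b) ^ 2 : ℕ) : ZMod (2 * (k + k))) = ((b ^ 2 : ℕ) : ZMod _) := by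
    push_cast at h2 ⊢
    linear_combination (b + k : ZMod (2 * (k + k))) * h2
  have odd_antiperiod (b : ℕ) :
      stdAddChar (N := 2 * (4 * (k + k))) (((2 * (k + k + b) + 1) ^ 2 : ℕ) : ZMod _) =
        - stdAddChar (N := 2 * (4 * (k + k))) (((2 * b + 1) ^ 2 : ℕ) : ZMod _) := by
    have : (((2 * (k + k + b) + 1) ^ 2 : ℕ) : ZMod (2 * (4 * (k + k)))) =
        (((2 * b + 1) ^ 2 : ℕ) : ZMod _) + ((4 * (k + k) * 1 : ℕ) : ZMod _) := by
      push_cast at h8 ⊢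
      linear_combination (b + k : ZMod (2 * (4 * (k + k)))) * h8
    rw [this, AddChar.map_add_eq_mul, stdAddChar_natCast_mul (M := 2) _ _ (by ring), Nat.cast_one,
      stdAddChar_two_one, mul_neg_one]
  have evens : ∑ b ∈ range (k + k + (k + k)),
      stdAddChar (N := 2 * (4 * (k + k))) (((2 * b) ^ 2 : ℕ) : ZMod _) =
        2 * quadGaussSum (k + k) := by
    rw [sum_range_add]
    simp only [even_terms, even_period]
    rw [quadGaussSum]
    ring
  have odds : ∑ b ∈ range (k + k + (k + k)),
      stdAddChar (N := 2 * (4 * (k + k))) (((2 * b + 1) ^ 2 : ℕ) : ZMod _) = 0 := by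
    rw [sum_range_add]
    simp only [odd_antiperiod, sum_neg_distrib, add_neg_cancel]
  rw [quadGaussSum, show range (4 * (k + k)) = range (2 * (k + k + (k + k))) by ring_nf,
    sum_range_two_mul, evens, odds, add_zero]

theorem quadGaussSum_two_pow {k : ℕ} (hk : 1 ≤ k) :
    quadGaussSum (2 ^ k) = (√2 : ℂ) ^ k * stdAddChar (N := 8) 1 := by
  have hs : (√2 : ℂ) ^ 2 = 2 := by exact_mod_cast Real.sq_sqrt (zero_le_two (α := ℝ))
  have hz := stdAddChar_eight_one
  set z := stdAddChar (N := 8) 1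
  have hz2 : z ^ 2 = Complex.I := by
    rw [hz]
    linear_combination (Complex.I / 2) * hs + ((√2 : ℂ) ^ 2 / 4) * Complex.I_sq
  have hz8 : z ^ 8 = 1 := by
    rw [show z ^ 8 = (z ^ 2) ^ 4 by ring, hz2, Complex.I_pow_four]
  obtain ⟨k, rfl⟩ := Nat.exists_eq_add_of_le' hk
  clear hk
  induction k using Nat.twoStepInduction with
  | zero =>
    have term (a : ℕ) :
        stdAddChar (N := 2 * 2 ^ (0 + 1)) ((a ^ 2 : ℕ) : ZMod _) = z ^ (2 * a ^ 2) := by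
      rw [← stdAddChar_natCast_mul (N := 8) 2 _ (by norm_num), stdAddChar_natCast_eq_pow]
    simp only [quadGaussSum, term, show 2 ^ (0 + 1) = 2 by rfl, sum_range_succ, sum_range_zero]
    linear_combination hz2 - ((1 + Complex.I) / 2) * hs - √2 * hz
  | one =>
    have term (a : ℕ) : stdAddChar (N := 2 * 2 ^ (1 + 1)) ((a ^ 2 : ℕ) : ZMod _) = z ^ a ^ 2 :=
      stdAddChar_natCast_eq_pow (N := 8) _
    simp only [quadGaussSum, term, show 2 ^ (1 + 1) = 4 by rfl, sum_range_succ, sum_range_zero]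
    linear_combination (z ^ 2 + Complex.I) * hz2 + Complex.I_sq + z * hz8 - z * hs
  | more k ih _ =>
    rw [quadGaussSum_of_eq_four_mul (N := 2 ^ (k + 1)) (by ring)
      (Nat.even_pow.2 ⟨even_two, by omega⟩), ih]
    linear_combination -(√2 : ℂ) ^ (k + 1) * z * hs

section NormSq

variable {N n : ℕ}

theorem two_mul_natCast_val_natCast (x : ℕ) :
    2 * (((x : ZMod N).val : ℕ) : ZMod (2 * N)) = 2 * (x : ZMod (2 * N)) := by
  rw [val_natCast]
  exact_mod_cast (natCast_eq_natCast_iff _ _ _).2 (Nat.ModEq.mul_left' 2 (Nat.mod_modEq x N))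

theorem natCast_val_natCast_sq (hN : Even N) (x : ℕ) :
    (((x : ZMod N).val : ℕ) : ZMod (2 * N)) ^ 2 = (x : ZMod (2 * N)) ^ 2 := by
  obtain ⟨k, rfl⟩ := hN
  have h0 : ((2 * (k + k) : ℕ) : ZMod (2 * (k + k))) = 0 := natCast_self _
  rw [val_natCast]
  conv_rhs => rw [← Nat.mod_add_div x (k + k)]
  push_cast at h0 ⊢
  linear_combination
    (-(((x % (k + k) : ℕ) : ZMod (2 * (k + k))) * (x / (k + k) : ℕ))
      - ((x / (k + k) : ℕ) : ZMod (2 * (k + k))) ^ 2 * k) * h0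

variable [NeZero N]

theorem dotp_eq_natCast (u v : Fin n → ZMod N) :
    dotp u v = ((∑ i, (u i).val * (v i).val : ℕ) : ZMod N) := by
  simp only [dotp, Nat.cast_sum, Nat.cast_mul, natCast_zmod_val]

def normSq (v : Fin n → ZMod N) : ZMod (2 * N) := ∑ i, ((v i).val : ZMod (2 * N)) ^ 2

theorem natCast_wtEv (hN : Even N) (v : Fin n → ZMod N) :
    (wtEv v : ZMod (2 * N)) = normSq v := by
  obtain ⟨k, rfl⟩ := hN
  have h0 : ((2 * (k + k) : ℕ) : ZMod (2 * (k + k))) = 0 := natCast_self _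
  rw [wtEv, normSq, Nat.cast_sum]
  refine sum_congr rfl fun i _ => ?_
  have hle := (v i).val_lt.le
  rcases min_choice ((v i).val ^ 2) ((k + k - (v i).val) ^ 2) with h | h <;> rw [wtE, h]
  · push_cast
    ring
  · push_cast [Nat.cast_sub hle] at h0 ⊢
    linear_combination (k - (v i).val : ZMod (2 * (k + k))) * h0

theorem normSq_add (hN : Even N) (u v : Fin n → ZMod N) :
    normSq (u + v) = normSq u + normSq v + 2 * ((dotp u v).val : ZMod (2 * N)) := by
  have coord (i : Fin n) : (u + v) i = (((u i).val + (v i).val : ℕ) : ZMod N) := by simp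
  simp only [normSq, coord, natCast_val_natCast_sq hN, dotp_eq_natCast,
    two_mul_natCast_val_natCast]
  push_cast
  rw [mul_sum, ← sum_add_distrib, ← sum_add_distrib]
  refine sum_congr rfl fun i _ => ?_
  ring

theorem two_mul_normSq (v : Fin n → ZMod N) :
    2 * normSq v = 2 * ((dotp v v).val : ZMod (2 * N)) := by
  rw [dotp_eq_natCast, two_mul_natCast_val_natCast, normSq]
  push_cast
  simp only [sq]

theorem stdAddChar_two_mul_val (a : ZMod N) :
    stdAddChar (N := 2 * N) (2 * (a.val : ZMod (2 * N))) = stdAddChar (N := N) a := by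
  have : 2 * (a.val : ZMod (2 * N)) = ((2 * a.val : ℕ) : ZMod (2 * N)) := by push_cast; rfl
  rw [this, stdAddChar_natCast_mul (M := N) 2 a.val rfl, natCast_zmod_val]

noncomputable def expNormSq (v : Fin n → ZMod N) : ℂ := stdAddChar (N := 2 * N) (normSq v)

theorem expNormSq_add (hN : Even N) (u v : Fin n → ZMod N) :
    expNormSq (u + v) = expNormSq u * expNormSq v * stdAddChar (N := N) (dotp u v) := by
  rw [expNormSq, normSq_add hN, AddChar.map_add_eq_mul, AddChar.map_add_eq_mul,
    stdAddChar_two_mul_val, expNormSq, expNormSq]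

theorem sq_expNormSq_of_dotp_self (v : Fin n → ZMod N) (h : dotp v v = 0) :
    expNormSq v ^ 2 = 1 := by
  rw [expNormSq, ← AddChar.map_nsmul_eq_pow, two_nsmul, ← two_mul, two_mul_normSq, h, val_zero,
    Nat.cast_zero, mul_zero, AddChar.map_zero_eq_one]

theorem sum_expNormSq : ∑ v : Fin n → ZMod N, expNormSq v = quadGaussSum N ^ n := by
  classical
  have gauss : ∑ a : ZMod N, stdAddChar (N := 2 * N) ((a.val : ZMod (2 * N)) ^ 2) =
      quadGaussSum N := by
    rw [quadGaussSum, ← sum_comp_val]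
    simp only [Nat.cast_pow]
  simp only [expNormSq, normSq, AddChar.map_sum_eq_prod]
  rw [← Fintype.prod_sum fun _ a => stdAddChar (N := 2 * N) (((a : ZMod N).val : ZMod (2 * N)) ^ 2),
    gauss, prod_const, card_univ, Fintype.card_fin]

open Classical in
theorem sum_stdAddChar_dotp (C : AddSubgroup (Fin n → ZMod N)) [Fintype C] (v : Fin n → ZMod N) :
    ∑ c : C, stdAddChar (N := N) (dotp (c : Fin n → ZMod N) v) =
      if v ∈ dualCode (C : Set (Fin n → ZMod N)) then (Fintype.card C : ℂ) else 0 := by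
  let dotpLeft : (Fin n → ZMod N) →+ ZMod N :=
    AddMonoidHom.mk' (fun c => dotp c v) fun a b => dotp_add_left a b v
  let ψ : AddChar C ℂ := stdAddChar.compAddMonoidHom (dotpLeft.comp C.subtype)
  have hψ : ψ = 0 ↔ v ∈ dualCode (C : Set (Fin n → ZMod N)) := by
    simp only [AddChar.eq_zero_iff, ψ, AddChar.compAddMonoidHom_apply, AddMonoidHom.coe_comp,
      Function.comp_apply, AddSubgroup.coe_subtype, stdAddChar_eq_one_iff, Subtype.forall]
    rfl
  exact (AddChar.sum_eq_ite ψ).trans (if_congr hψ rfl rfl)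

end NormSq

section Characteristic

variable {N n : ℕ} [NeZero N]

/-- The analogue of a characteristic vector of a unimodular lattice: `normSq c + 2 ⟨c, s⟩ = 0`
in `ZMod (2 * N)` for every `c ∈ C`. -/
def IsCharacteristic (C : AddSubgroup (Fin n → ZMod N)) (s : Fin n → ZMod N) : Prop :=
  ∀ c ∈ C, expNormSq c * stdAddChar (N := N) (dotp c s) = 1

theorem card_mul_expNormSq_eq_quadGaussSum_pow (hN : Even N) {C : AddSubgroup (Fin n → ZMod N)}
    [Fintype C] (hC : IsSelfDual C)
    {s : Fin n → ZMod N} (hs : IsCharacteristic C s) :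
    (Fintype.card C : ℂ) * expNormSq s = quadGaussSum N ^ n := by
  classical
  have translate {c : Fin n → ZMod N} (hc : c ∈ C) (v : Fin n → ZMod N) :
      expNormSq (c + (v + s)) = expNormSq (v + s) * stdAddChar (N := N) (dotp c v) := by
    rw [expNormSq_add hN, dotp_add_right, AddChar.map_add_eq_mul]
    linear_combination expNormSq (v + s) * stdAddChar (N := N) (dotp c v) * hs c hc
  have coset : ∑ c : C, expNormSq (c + s : Fin n → ZMod N) = Fintype.card C * expNormSq s := by
    have (c : C) : expNormSq (c + s : Fin n → ZMod N) = expNormSq s := by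
      rw [expNormSq_add hN, mul_right_comm, hs c c.2, one_mul]
    simp only [this, sum_const, card_univ, nsmul_eq_mul]
  have translates : ∑ c : C, ∑ v, expNormSq (c + (v + s) : Fin n → ZMod N) =
      Fintype.card C * quadGaussSum N ^ n := by
    have (c : C) : ∑ v, expNormSq (c + (v + s) : Fin n → ZMod N) = quadGaussSum N ^ n := by
      rw [← sum_expNormSq]
      exact Fintype.sum_equiv (Equiv.addRight (c + s : Fin n → ZMod N)) _ _ fun v => by
        rw [Equiv.coe_addRight, add_left_comm]
    simp only [this, sum_const, card_univ, nsmul_eq_mul]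
  -- Poisson summation: `∑_{c ∈ C} e(⟨c, v⟩)` is `|C|` times the indicator of `C^⊥ = C`.
  have poisson :
      ∑ v, expNormSq (v + s) * ∑ c : C, stdAddChar (N := N) (dotp (c : Fin n → ZMod N) v) =
      ∑ c : C, expNormSq (c + s : Fin n → ZMod N) * Fintype.card C := by
    simp only [sum_stdAddChar_dotp, hC.mem_dualCode_iff, mul_ite, mul_zero]
    rw [← sum_filter, sum_subtype (p := (· ∈ C)) _ (by simp)]
  refine mul_left_cancel₀ (Nat.cast_ne_zero.2 (Fintype.card_ne_zero (α := C))) ?_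
  calc (Fintype.card C : ℂ) * (Fintype.card C * expNormSq s)
      = ∑ v, expNormSq (v + s) * ∑ c : C, stdAddChar (N := N) (dotp (c : Fin n → ZMod N) v) := by
        rw [poisson, ← sum_mul, coset, mul_comm]
    _ = ∑ c : C, ∑ v, expNormSq (c + (v + s) : Fin n → ZMod N) := by
        simp only [mul_sum, translate (Subtype.prop _)]
        exact sum_comm
    _ = Fintype.card C * quadGaussSum N ^ n := translates

end Characteristic

section Shadow

variable {m n : ℕ} {C : AddSubgroup (Fin n → ZMod (2 ^ m))}

theorem mem_deSub_iff_expNormSq_eq_one (hm : m ≠ 0) {c : Fin n → ZMod (2 ^ m)} (hc : c ∈ C) :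
    c ∈ deSub m n C ↔ expNormSq c = 1 := by
  rw [expNormSq, stdAddChar_eq_one_iff, ← natCast_wtEv ((Nat.even_pow' hm).2 even_two),
    natCast_eq_zero_iff, ← pow_succ']
  exact and_iff_right hc

theorem expNormSq_eq_neg_one_of_notMem_deSub (hm : m ≠ 0) (hC : IsSelfDual C)
    {c : Fin n → ZMod (2 ^ m)} (hc : c ∈ C) (hc₀ : c ∉ deSub m n C) : expNormSq c = -1 :=
  (sq_eq_one_iff.1 (sq_expNormSq_of_dotp_self c (hC.dotp_eq_zero hc hc))).resolve_left
    (mt (mem_deSub_iff_expNormSq_eq_one hm hc).2 hc₀)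

theorem add_mem_deSub_of_notMem (hm : m ≠ 0) (hC : IsSelfDual C)
    {u c : Fin n → ZMod (2 ^ m)} (hu : u ∈ C) (hc : c ∈ C) (hu₀ : u ∉ deSub m n C)
    (hc₀ : c ∉ deSub m n C) : u + c ∈ deSub m n C := by
  rw [mem_deSub_iff_expNormSq_eq_one hm (add_mem hu hc),
    expNormSq_add ((Nat.even_pow' hm).2 even_two),
    expNormSq_eq_neg_one_of_notMem_deSub hm hC hu hu₀,
    expNormSq_eq_neg_one_of_notMem_deSub hm hC hc hc₀, hC.dotp_eq_zero hu hc,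
    AddChar.map_zero_eq_one]
  norm_num

theorem dotp_ne_zero_of_mem_shadow (hm : m ≠ 0) (hC : IsSelfDual C)
    {s : Fin n → ZMod (2 ^ m)} (hs : s ∈ dualCode (deSub m n C)) (hsC : s ∉ C)
    {c : Fin n → ZMod (2 ^ m)} (hc : c ∈ C) (hc₀ : c ∉ deSub m n C) : dotp c s ≠ 0 := by
  intro hcs
  have hs' : s ∈ dualCode (C : Set (Fin n → ZMod (2 ^ m))) := by
    intro u hu
    by_cases hu₀ : u ∈ deSub m n C
    · exact hs u hu₀
    · have := hs _ (add_mem_deSub_of_notMem hm hC hu hc hu₀ hc₀)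
      rwa [dotp_add_left, hcs, add_zero] at this
  exact hsC (hC.mem_dualCode_iff.1 hs')

theorem isCharacteristic_of_mem_shadow (hm : m ≠ 0) (hC : IsSelfDual C)
    {s : Fin n → ZMod (2 ^ m)} (hs : s ∈ dualCode (deSub m n C)) (hsC : s ∉ C) :
    IsCharacteristic C s := by
  intro c hc
  by_cases hc₀ : c ∈ deSub m n C
  · rw [(mem_deSub_iff_expNormSq_eq_one hm hc).1 hc₀, hs c hc₀, AddChar.map_zero_eq_one, one_mul]
  · have hsq : stdAddChar (N := 2 ^ m) (dotp c s) ^ 2 = 1 := by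
      rw [← AddChar.map_nsmul_eq_pow, two_nsmul, ← dotp_add_left,
        hs _ (add_mem_deSub_of_notMem hm hC hc hc hc₀ hc₀), AddChar.map_zero_eq_one]
    have hne : stdAddChar (N := 2 ^ m) (dotp c s) ≠ 1 :=
      mt stdAddChar_eq_one_iff.1 (dotp_ne_zero_of_mem_shadow hm hC hs hsC hc hc₀)
    rw [expNormSq_eq_neg_one_of_notMem_deSub hm hC hc hc₀, (sq_eq_one_iff.1 hsq).resolve_left hne]
    norm_num

end Shadow

theorem shadow_weight_general (m n : ℕ) (hm : 2 ≤ m)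
    (C : AddSubgroup (Fin n → ZMod (2 ^ m)))
    (hC : (C : Set (Fin n → ZMod (2 ^ m))) = dualCode (C : Set (Fin n → ZMod (2 ^ m))))
    (s : Fin n → ZMod (2 ^ m)) (hs : s ∈ dualCode (deSub m n C)) (hsC : s ∉ C) :
    wtEv s ≡ 2 ^ (m - 2) * n [MOD 2 ^ (m + 1)] := by
  classical
  have hN : Even (2 ^ m) := (Nat.even_pow' (by omega)).2 even_two
  have key := card_mul_expNormSq_eq_quadGaussSum_pow hN hC
    (isCharacteristic_of_mem_shadow (by omega) hC hs hsC)
  have eighth_root : stdAddChar (N := 8) 1 ^ n =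
      stdAddChar (N := 2 * 2 ^ m) ((2 ^ (m - 2) * n : ℕ) : ZMod (2 * 2 ^ m)) := by
    have h8 : 2 * 2 ^ m = 2 ^ (m - 2) * 8 := by
      rw [← pow_succ', show 8 = 2 ^ 3 by rfl, ← pow_add]
      congr 1
      omega
    rw [stdAddChar_natCast_mul (M := 8) _ _ h8]
    exact (stdAddChar_natCast_eq_pow n).symm
  rw [quadGaussSum_two_pow (by omega), mul_pow, ← pow_mul, eighth_root] at key
  have := Complex.eq_of_ofReal_mul_eq_ofReal_mul (a := Fintype.card C) (b := √2 ^ (m * n))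
    (by positivity) (by positivity) (AddChar.norm_apply _ _) (AddChar.norm_apply _ _)
    (by push_cast; exact key)
  rw [pow_succ', ← natCast_eq_natCast_iff, natCast_wtEv hN]
  exact injective_stdAddChar this

theorem shadow_weight (m n : ℕ) (hm : 2 ≤ m) (hn : 0 < n)
    (C : AddSubgroup (Fin n → ZMod (2 ^ m)))
    (hC : (C : Set (Fin n → ZMod (2 ^ m))) = dualCode (C : Set (Fin n → ZMod (2 ^ m))))
    (hTypeI : ∃ c ∈ C, ¬ 2 ^ (m + 1) ∣ wtEv c)
    (s : Fin n → ZMod (2 ^ m)) (hs : s ∈ dualCode (deSub m n C)) (hsC : s ∉ C) :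
    wtEv s ≡ 2 ^ (m - 2) * n [MOD 2 ^ (m + 1)] :=
  shadow_weight_general m n hm C hC s hs hsC
end
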